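/- Let D be a measurable subset of ℝ^d, let 𝓔 be a collection of admissible subsets of D, let E ∈ 𝓔 be fixed, let s ∈ (0,1/2], and let c, C > 0. Let Φ be the set of measurable functions f : D → [0,∞) taking only values in ℕ ∪ {0}, satisfying J(f,E',s) ≤ 1/2 for all E' ∈ 𝓔 and λ({x ∈ E : f(x) > 0}) ≤ (1/2)·λ(E). Suppose that for every f ∈ Φ, every α ≥ 0, and every real M > 0 with J(f,E',s) ≤ M for all E' ∈ 𝓔, one has λ({x ∈ E : f(x) > α}) ≤ C·λ(E)·exp(−c·α/M). Then for every measurable f : D → ℝ, every median m of f on E, every α ≥ 0, and every real M > 0 with J(f,E',s) ≤ M for all E' ∈ 𝓔, one has λ({x ∈ E : |f(x) − m| > α}) ≤ 2·max{C, e^c}·λ(E)·exp(−c·α/(4M)). -/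
import Mathlib


open MeasureTheory Set

/-- The John–Strömberg functional
`J(f,E,s) = inf_{c ∈ ℝ} inf {α ≥ 0 : μ({x ∈ E : |f(x) − c| > α}) < s·μ(E)}`. -/
noncomputable def JS {X : Type*} [MeasurableSpace X] (μ : Measure X)
    (f : X → ℝ) (E : Set X) (s : ℝ) : ℝ :=
  sInf {α : ℝ | 0 ≤ α ∧ ∃ c : ℝ, μ {x ∈ E | α < |f x - c|} < ENNReal.ofReal s * μ E}

/-- An admissible set: measurable with positive finite measure. -/
def Admissible {X : Type*} [MeasurableSpace X] (μ : Measure X) (E : Set X) : Prop :=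
  MeasurableSet E ∧ 0 < μ E ∧ μ E < ⊤

/-- `m` is a median of `f` on `E`. -/
def IsMedianOn {X : Type*} [MeasurableSpace X] (μ : Measure X)
    (f : X → ℝ) (E : Set X) (m : ℝ) : Prop :=
  μ {x ∈ E | f x < m} ≤ μ E / 2 ∧ μ {x ∈ E | m < f x} ≤ μ E / 2

-- JS of neg
lemma JS_neg {X : Type*} [MeasurableSpace X] (μ : Measure X) (f : X → ℝ) (E : Set X) (s : ℝ) :
    JS μ (fun x => -f x) E s = JS μ f E s := by
  unfold JS
  congr 1
  ext α
  simp only [Set.mem_setOf_eq]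
  constructor
  · rintro ⟨h0, cc, hcc⟩
    refine ⟨h0, -cc, ?_⟩
    have : {x ∈ E | α < |f x - -cc|} = {x ∈ E | α < |-f x - cc|} := by
      ext x
      have h : |f x - -cc| = |-f x - cc| := by
        rw [show f x - -cc = -(-f x - cc) by ring, abs_neg]
      simp only [Set.mem_setOf_eq, h]
    rwa [this]
  · rintro ⟨h0, cc, hcc⟩
    refine ⟨h0, -cc, ?_⟩
    have : {x ∈ E | α < |-f x - -cc|} = {x ∈ E | α < |f x - cc|} := by
      ext x
      have h : |-f x - -cc| = |f x - cc| := by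
        rw [show -f x - -cc = -(f x - cc) by ring, abs_neg]
      simp only [Set.mem_setOf_eq, h]
    rwa [this]

-- witness extraction
lemma JS_witness {X : Type*} [MeasurableSpace X] {μ : Measure X}
    {f : X → ℝ} (hf : Measurable f) {E : Set X} (hEm : MeasurableSet E)
    (hE0 : 0 < μ E) (hEfin : μ E < ⊤) {s : ℝ} (hs0 : 0 < s)
    {M : ℝ} (hM : 0 < M) (hJ : JS μ f E s ≤ M) :
    ∃ α₀ c₀ : ℝ, 0 ≤ α₀ ∧ α₀ < 2*M ∧
      μ {x ∈ E | α₀ < |f x - c₀|} < ENNReal.ofReal s * μ E := by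
  set S := {α : ℝ | 0 ≤ α ∧ ∃ c : ℝ, μ {x ∈ E | α < |f x - c|} < ENNReal.ofReal s * μ E} with hS
  have hpos : 0 < ENNReal.ofReal s * μ E :=
    ENNReal.mul_pos (by simp [ENNReal.ofReal_pos.2 hs0, ne_of_gt]) (ne_of_gt hE0)
  have hne : S.Nonempty := by
    set A : ℕ → Set X := fun n => {x ∈ E | (n : ℝ) < |f x - 0|} with hA
    have hmeas : ∀ n, NullMeasurableSet (A n) μ := by
      intro n
      exact ((hEm.inter (measurableSet_lt measurable_const
        ((hf.sub_const 0).abs)))).nullMeasurableSet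
    have hanti : Antitone A := by
      intro n m hnm x hx
      exact ⟨hx.1, lt_of_le_of_lt (by exact_mod_cast Nat.cast_le.2 hnm) hx.2⟩
    have hfin : ∃ i, μ (A i) ≠ ⊤ := ⟨0, by
      exact ne_of_lt (lt_of_le_of_lt (measure_mono (fun x hx => hx.1)) hEfin)⟩
    have hiInter : ⋂ n, A n = ∅ := by
      ext x
      simp only [Set.mem_iInter, Set.mem_empty_iff_false, iff_false]
      intro h
      obtain ⟨n, hn⟩ := exists_nat_gt (|f x - 0|)
      exact absurd (h n).2 (not_lt.2 hn.le)
    have htend := tendsto_measure_iInter_atTop hmeas hanti hfin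
    rw [hiInter, measure_empty] at htend
    obtain ⟨n, hn⟩ := (htend.eventually_lt_const hpos).exists
    exact ⟨n, ⟨Nat.cast_nonneg n, 0, hn⟩⟩
  have hbdd : BddBelow S := ⟨0, fun a ha => ha.1⟩
  have hlt : sInf S < 2*M := lt_of_le_of_lt hJ (by linarith)
  obtain ⟨a, haS, ha⟩ := (csInf_lt_iff hbdd hne).1 hlt
  obtain ⟨ha0, c₀, hc₀⟩ := haS
  exact ⟨a, c₀, ha0, ha, hc₀⟩

lemma oneSided {d : ℕ} (D : Set (Fin d → ℝ))
    (𝓔 : Set (Set (Fin d → ℝ))) (h𝓔 : ∀ E ∈ 𝓔, Admissible volume E ∧ E ⊆ D)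
    (E : Set (Fin d → ℝ)) (hE : E ∈ 𝓔)
    (s : ℝ) (hs : s ∈ Set.Ioc (0:ℝ) (1/2))
    (c C : ℝ) (hc : 0 < c) (hC : 0 < C)
    (hyp : ∀ f : (Fin d → ℝ) → ℝ, Measurable f →
      (∀ x ∈ D, 0 ≤ f x) → (∀ x ∈ D, ∃ n : ℕ, f x = n) →
      (∀ E' ∈ 𝓔, JS volume f E' s ≤ 1/2) →
      volume {x ∈ E | 0 < f x} ≤ volume E / 2 →
      ∀ α : ℝ, 0 ≤ α → ∀ M : ℝ, 0 < M → (∀ E' ∈ 𝓔, JS volume f E' s ≤ M) →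
        volume {x ∈ E | α < f x} ≤
          ENNReal.ofReal (C * Real.exp (-(c * α) / M)) * volume E)
    (f : (Fin d → ℝ) → ℝ) (hf : Measurable f) (m : ℝ)
    (hmed : volume {x ∈ E | m < f x} ≤ volume E / 2)
    (α : ℝ) (hα : 0 ≤ α) (M : ℝ) (hM : 0 < M)
    (hJ : ∀ E' ∈ 𝓔, JS volume f E' s ≤ M) :
    volume {x ∈ E | α < f x - m} ≤
      ENNReal.ofReal (C * Real.exp (-(c * α) / (4 * M))) * volume E := by
  have h4M : (0:ℝ) < 4 * M := by linarith
  set u : (Fin d → ℝ) → ℝ := fun x => max (f x - m) 0 / (4 * M) with hu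
  set g : (Fin d → ℝ) → ℝ := fun x => ((⌈u x⌉₊ : ℕ) : ℝ) with hg
  have hu_meas : Measurable u := (((hf.sub_const m).max measurable_const).div_const (4*M))
  have hg_meas : Measurable g := Measurable.comp measurable_from_top hu_meas.nat_ceil
  -- g positivity set
  have hgpos : ∀ x, (0 < g x ↔ m < f x) := by
    intro x
    simp only [hg, hu]
    rw [show ((0:ℝ) < (⌈max (f x - m) 0 / (4*M)⌉₊ : ℝ)) ↔ 0 < ⌈max (f x - m) 0 / (4*M)⌉₊ by
      exact_mod_cast Iff.rfl]
    rw [Nat.ceil_pos, div_pos_iff]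
    constructor
    · rintro (⟨h1, _⟩ | ⟨_, h2⟩)
      · rcases lt_max_iff.1 h1 with h | h
        · linarith
        · exact absurd h (lt_irrefl 0)
      · linarith
    · intro h
      exact Or.inl ⟨lt_max_iff.2 (Or.inl (by linarith)), h4M⟩
  -- JS of g is at most 1/2
  have hJS_g : ∀ E' ∈ 𝓔, JS volume g E' s ≤ 1/2 := by
    intro E' hE'
    obtain ⟨⟨hE'm, hE'0, hE'fin⟩, -⟩ := h𝓔 E' hE'
    obtain ⟨α₀, c₀, hα₀0, hα₀lt, hμ⟩ :=
      JS_witness hf hE'm hE'0 hE'fin hs.1 hM (hJ E' hE')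
    set a : ℝ := max (c₀ - α₀ - m) 0 / (4 * M) with ha
    have ha0 : 0 ≤ a := div_nonneg (le_max_right _ _) h4M.le
    set n : ℕ := ⌈a⌉₊ with hn
    have key : {x ∈ E' | (1:ℝ)/2 < |g x - ((n:ℝ) + 1/2)|} ⊆ {x ∈ E' | α₀ < |f x - c₀|} := by
      intro x hx
      refine ⟨hx.1, ?_⟩
      by_contra hcon
      push_neg at hcon
      -- |f x - c₀| ≤ α₀
      have hfx : c₀ - α₀ ≤ f x ∧ f x ≤ c₀ + α₀ := abs_le.1 hcon |>.imp (by intro h; linarith) (by intro h; linarith)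
      have hua : a ≤ u x := by
        have hmax : max (c₀ - α₀ - m) 0 ≤ max (f x - m) 0 :=
          max_le_max (by linarith [hfx.1]) le_rfl
        exact (div_le_div_iff_of_pos_right h4M).2 hmax
      have hub : u x ≤ a + 2 * α₀ / (4 * M) := by
        have : max (f x - m) 0 ≤ max (c₀ - α₀ - m) 0 + 2 * α₀ := by
          rcases le_or_gt (f x - m) 0 with h | h
          · calc max (f x - m) 0 = 0 := max_eq_right h
              _ ≤ max (c₀ - α₀ - m) 0 + 2 * α₀ := by positivity
          · calc max (f x - m) 0 = f x - m := max_eq_left h.le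
              _ ≤ (c₀ - α₀ - m) + 2 * α₀ := by linarith [hfx.2]
              _ ≤ max (c₀ - α₀ - m) 0 + 2 * α₀ := by gcongr; exact le_max_left _ _
        calc u x = max (f x - m) 0 / (4*M) := rfl
          _ ≤ (max (c₀ - α₀ - m) 0 + 2 * α₀) / (4*M) := by gcongr
          _ = a + 2 * α₀ / (4 * M) := by rw [add_div]
      have hub1 : u x ≤ a + 1 := by
        have : 2 * α₀ / (4 * M) < 1 := by
          rw [div_lt_one h4M]; linarith
        linarith
      have hceil : n ≤ ⌈u x⌉₊ ∧ ⌈u x⌉₊ ≤ n + 1 := by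
        constructor
        · exact Nat.ceil_le_ceil hua
        · calc ⌈u x⌉₊ ≤ ⌈a + 1⌉₊ := Nat.ceil_le_ceil hub1
            _ = n + 1 := Nat.ceil_add_one ha0
      have h1 : (n : ℝ) ≤ g x := by
        simp only [hg]
        exact_mod_cast hceil.1
      have h2 : g x ≤ (n : ℝ) + 1 := by
        have := hceil.2
        simp only [hg]
        exact_mod_cast this
      have : |g x - ((n:ℝ) + 1/2)| ≤ 1/2 := by
        rw [abs_le]; constructor <;> linarith
      exact absurd hx.2 (not_lt.2 this)
    unfold JS
    apply csInf_le ⟨0, fun b hb => hb.1⟩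
    exact ⟨by norm_num, (n:ℝ) + 1/2, lt_of_le_of_lt (measure_mono key) hμ⟩
  -- apply hyp
  have happ := hyp g hg_meas (fun x _ => by simp [hg]) (fun x _ => ⟨⌈u x⌉₊, rfl⟩)
    hJS_g
    (by
      have : {x ∈ E | 0 < g x} = {x ∈ E | m < f x} := by
        ext x; simp only [Set.mem_setOf_eq, hgpos x]
      rw [this]; exact hmed)
    (α / (4 * M)) (by positivity) 1 one_pos
    (fun E' hE' => le_trans (hJS_g E' hE') (by norm_num))
  have hsub : {x ∈ E | α < f x - m} ⊆ {x ∈ E | α / (4*M) < g x} := by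
    intro x hx
    refine ⟨hx.1, ?_⟩
    have h1 : α / (4*M) < u x := by
      have hmax : max (f x - m) 0 = f x - m := max_eq_left (by linarith [hx.2])
      show α / (4*M) < max (f x - m) 0 / (4 * M)
      rw [hmax]
      exact (div_lt_div_iff_of_pos_right h4M).2 hx.2
    calc α / (4*M) < u x := h1
      _ ≤ g x := by exact_mod_cast Nat.le_ceil (u x)
  calc volume {x ∈ E | α < f x - m} ≤ volume {x ∈ E | α / (4*M) < g x} := measure_mono hsub
    _ ≤ ENNReal.ofReal (C * Real.exp (-(c * (α / (4*M))) / 1)) * volume E := happ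
    _ = ENNReal.ofReal (C * Real.exp (-(c * α) / (4*M))) * volume E := by
      rw [show -(c * (α / (4*M))) / 1 = -(c*α)/(4*M) by ring]


theorem stmt7 {d : ℕ} (D : Set (Fin d → ℝ)) (hD : MeasurableSet D)
    (𝓔 : Set (Set (Fin d → ℝ))) (h𝓔 : ∀ E ∈ 𝓔, Admissible volume E ∧ E ⊆ D)
    (E : Set (Fin d → ℝ)) (hE : E ∈ 𝓔)
    (s : ℝ) (hs : s ∈ Set.Ioc (0:ℝ) (1/2))
    (c C : ℝ) (hc : 0 < c) (hC : 0 < C)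
    (hyp : ∀ f : (Fin d → ℝ) → ℝ, Measurable f →
      (∀ x ∈ D, 0 ≤ f x) → (∀ x ∈ D, ∃ n : ℕ, f x = n) →
      (∀ E' ∈ 𝓔, JS volume f E' s ≤ 1/2) →
      volume {x ∈ E | 0 < f x} ≤ volume E / 2 →
      ∀ α : ℝ, 0 ≤ α → ∀ M : ℝ, 0 < M → (∀ E' ∈ 𝓔, JS volume f E' s ≤ M) →
        volume {x ∈ E | α < f x} ≤
          ENNReal.ofReal (C * Real.exp (-(c * α) / M)) * volume E) :
    ∀ f : (Fin d → ℝ) → ℝ, Measurable f →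
      ∀ m : ℝ, IsMedianOn volume f E m →
      ∀ α : ℝ, 0 ≤ α → ∀ M : ℝ, 0 < M → (∀ E' ∈ 𝓔, JS volume f E' s ≤ M) →
        volume {x ∈ E | α < |f x - m|} ≤
          ENNReal.ofReal (2 * max C (Real.exp c) * Real.exp (-(c * α) / (4 * M))) *
            volume E := by
  intro f hf m hmed α hα M hM hJ
  have hA := oneSided D 𝓔 h𝓔 E hE s hs c C hc hC hyp f hf m hmed.2 α hα M hM hJ
  have hJneg : ∀ E' ∈ 𝓔, JS volume (fun x => -f x) E' s ≤ M := by
    intro E' hE'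
    rw [JS_neg]
    exact hJ E' hE'
  have hmedneg : volume {x ∈ E | -m < -f x} ≤ volume E / 2 := by
    have : {x ∈ E | -m < -f x} = {x ∈ E | f x < m} := by
      ext x
      simp only [Set.mem_setOf_eq, neg_lt_neg_iff]
    rw [this]
    exact hmed.1
  have hB := oneSided D 𝓔 h𝓔 E hE s hs c C hc hC hyp (fun x => -f x) hf.neg (-m)
    hmedneg α hα M hM hJneg
  have hBset : {x ∈ E | α < (fun x => -f x) x - -m} = {x ∈ E | α < m - f x} := by
    ext x
    have : -f x - -m = m - f x := by ring
    simp only [Set.mem_setOf_eq, this]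
  rw [hBset] at hB
  have hsub : {x ∈ E | α < |f x - m|} ⊆
      {x ∈ E | α < f x - m} ∪ {x ∈ E | α < m - f x} := by
    intro x hx
    rcases lt_abs.1 hx.2 with h | h
    · exact Or.inl ⟨hx.1, h⟩
    · exact Or.inr ⟨hx.1, by linarith [h]⟩
  set X : ℝ := C * Real.exp (-(c * α) / (4 * M)) with hX
  have hX0 : 0 ≤ X := by positivity
  calc volume {x ∈ E | α < |f x - m|}
      ≤ volume ({x ∈ E | α < f x - m} ∪ {x ∈ E | α < m - f x}) := measure_mono hsub
    _ ≤ volume {x ∈ E | α < f x - m} + volume {x ∈ E | α < m - f x} := measure_union_le _ _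
    _ ≤ ENNReal.ofReal X * volume E + ENNReal.ofReal X * volume E := add_le_add hA hB
    _ = ENNReal.ofReal (X + X) * volume E := by
        rw [ENNReal.ofReal_add hX0 hX0, add_mul]
    _ ≤ ENNReal.ofReal (2 * max C (Real.exp c) * Real.exp (-(c * α) / (4 * M))) *
          volume E := by
        apply mul_le_mul_left
        apply ENNReal.ofReal_le_ofReal
        rw [hX]
        have h1 : C ≤ max C (Real.exp c) := le_max_left _ _
        have h2 : (0:ℝ) < Real.exp (-(c * α) / (4 * M)) := Real.exp_pos _
        nlinarith [Real.exp_pos (-(c * α) / (4 * M))]
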